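/- arXiv:1701.01010 — 3 statements merged into one kernel-verified Lean document; each statement's English description precedes it below -/
import Mathlib

section
/- If Φ : S → T is affine and sufficient for two states s₁, s₂ (i.e. there is an affine recovery map Ψ : T → S with Ψ(Φ(sᵢ)) = sᵢ for i=1,2), and both Φ* and Ψ* map feasible actions to feasible actions, then D_F(Φ(s₁),Φ(s₂)) = D_F(s₁,s₂). -/
/-!
Feasible actions for `Φ s₁, Φ s₂` pull back along `Φ` to feasible actions for `s₁, s₂` with the
same payoffs, and conversely feasible actions for `s₁, s₂` pull back along `Ψ`, with the same
payoffs because `Ψ` recovers both states. So both decision problems offer exactly the same pairs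
of payoffs, and the value function and the regret depend on nothing else.
-/

section

variable {V W : Type*} [AddCommGroup V] [Module ℝ V] [AddCommGroup W] [Module ℝ W]

/-- The regret `D_F(s₁, s₂)`, with `F` the value function of the action set `A`. -/
noncomputable def regret (A : Set (V →ₗ[ℝ] ℝ)) (F : V → ℝ) (s₁ s₂ : V) : ℝ :=
  sInf {x | ∃ a ∈ A, a s₂ = F s₂ ∧ x = F s₁ - a s₁}

theorem regret_congr {A : Set (V →ₗ[ℝ] ℝ)} {B : Set (W →ₗ[ℝ] ℝ)} {F : V → ℝ} {G : W → ℝ}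
    {s₁ s₂ : V} {t₁ t₂ : W}
    (himage : (fun b : W →ₗ[ℝ] ℝ => (b t₁, b t₂)) '' B = (fun a : V →ₗ[ℝ] ℝ => (a s₁, a s₂)) '' A)
    (h₁ : G t₁ = F s₁) (h₂ : G t₂ = F s₂) :
    regret B G t₁ t₂ = regret A F s₁ s₂ := by
  unfold regret
  congr 1
  ext x
  simp only [Set.mem_ofPred_eq, h₁, h₂]
  constructor
  · rintro ⟨b, hb, hopt, rfl⟩
    obtain ⟨a, ha, hab⟩ := himage ▸ Set.mem_image_of_mem _ hb
    simp only [Prod.mk.injEq] at hab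
    exact ⟨a, ha, hab.2 ▸ hopt, hab.1 ▸ rfl⟩
  · rintro ⟨a, ha, hopt, rfl⟩
    obtain ⟨b, hb, hab⟩ := himage.symm ▸ Set.mem_image_of_mem _ ha
    simp only [Prod.mk.injEq] at hab
    exact ⟨b, hb, hab.2 ▸ hopt, hab.1 ▸ rfl⟩

theorem image_eval_pair_comp_eq_of_recovery {S : Set V} {T : Set W}
    {A : Set (V →ₗ[ℝ] ℝ)} {B : Set (W →ₗ[ℝ] ℝ)} {Φ : V →ᵃ[ℝ] W} {Ψ : W →ᵃ[ℝ] V}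
    (hΦT : Set.MapsTo Φ S T)
    (hΦdual : ∀ b ∈ B, ∃ a ∈ A, ∀ s ∈ S, b (Φ s) = a s)
    (hΨdual : ∀ a ∈ A, ∃ b ∈ B, ∀ t ∈ T, a (Ψ t) = b t)
    {s₁ s₂ : V} (hs₁ : s₁ ∈ S) (hs₂ : s₂ ∈ S) (hrec1 : Ψ (Φ s₁) = s₁) (hrec2 : Ψ (Φ s₂) = s₂) :
    (fun b : W →ₗ[ℝ] ℝ => (b (Φ s₁), b (Φ s₂))) '' B = (fun a : V →ₗ[ℝ] ℝ => (a s₁, a s₂)) '' A := by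
  apply Set.Subset.antisymm
  · rintro _ ⟨b, hb, rfl⟩
    obtain ⟨a, ha, hab⟩ := hΦdual b hb
    exact ⟨a, ha, Prod.ext (hab s₁ hs₁).symm (hab s₂ hs₂).symm⟩
  · rintro _ ⟨a, ha, rfl⟩
    obtain ⟨b, hb, hab⟩ := hΨdual a ha
    exact ⟨b, hb, Prod.ext ((hab _ (hΦT hs₁)).symm.trans (congrArg a hrec1))
      ((hab _ (hΦT hs₂)).symm.trans (congrArg a hrec2))⟩

end

theorem regret_sufficiency_general {V W : Type*} [AddCommGroup V] [Module ℝ V]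
    [AddCommGroup W] [Module ℝ W]
    (S : Set V) (T : Set W)
    (A : Set (V →ₗ[ℝ] ℝ)) (B : Set (W →ₗ[ℝ] ℝ))
    (F : V → ℝ) (G : W → ℝ)
    (hF : ∀ s ∈ S, IsLUB ((fun a : V →ₗ[ℝ] ℝ => a s) '' A) (F s))
    (hG : ∀ t ∈ T, IsLUB ((fun b : W →ₗ[ℝ] ℝ => b t) '' B) (G t))
    (Φ : V →ᵃ[ℝ] W) (Ψ : W →ᵃ[ℝ] V)
    (hΦT : Set.MapsTo Φ S T)
    (s₁ s₂ : V) (hs₁ : s₁ ∈ S) (hs₂ : s₂ ∈ S)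
    (hrec1 : Ψ (Φ s₁) = s₁) (hrec2 : Ψ (Φ s₂) = s₂)
    (hΦdual : ∀ b ∈ B, ∃ a ∈ A, ∀ s ∈ S, b (Φ s) = a s)
    (hΨdual : ∀ a ∈ A, ∃ b ∈ B, ∀ t ∈ T, a (Ψ t) = b t) :
    sInf {x | ∃ b ∈ B, b (Φ s₂) = G (Φ s₂) ∧ x = G (Φ s₁) - b (Φ s₁)} =
      sInf {x | ∃ a ∈ A, a s₂ = F s₂ ∧ x = F s₁ - a s₁} := by
  have himage :=
    image_eval_pair_comp_eq_of_recovery hΦT hΦdual hΨdual hs₁ hs₂ hrec1 hrec2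
  have himage₁ := congrArg (Prod.fst '' ·) himage
  have himage₂ := congrArg (Prod.snd '' ·) himage
  simp only [Set.image_image] at himage₁ himage₂
  have h₁ : G (Φ s₁) = F s₁ := (hG _ (hΦT hs₁)).unique (himage₁ ▸ hF s₁ hs₁)
  have h₂ : G (Φ s₂) = F s₂ := (hG _ (hΦT hs₂)).unique (himage₂ ▸ hF s₂ hs₂)
  exact regret_congr himage h₁ h₂

/-- A sufficient affine map (one with an affine recovery map), whose dual and whose
recovery map's dual preserve the feasible action sets, preserves the regret. -/
theorem regret_sufficiency {V W : Type*} [AddCommGroup V] [Module ℝ V]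
    [AddCommGroup W] [Module ℝ W]
    (S : Set V) (T : Set W)
    (A : Set (V →ₗ[ℝ] ℝ)) (B : Set (W →ₗ[ℝ] ℝ))
    (F : V → ℝ) (G : W → ℝ)
    (hF : ∀ s ∈ S, IsLUB ((fun a : V →ₗ[ℝ] ℝ => a s) '' A) (F s))
    (hG : ∀ t ∈ T, IsLUB ((fun b : W →ₗ[ℝ] ℝ => b t) '' B) (G t))
    (Φ : V →ᵃ[ℝ] W) (Ψ : W →ᵃ[ℝ] V)
    (hΦT : Set.MapsTo Φ S T) (hΨS : Set.MapsTo Ψ T S)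
    (s₁ s₂ : V) (hs₁ : s₁ ∈ S) (hs₂ : s₂ ∈ S)
    (hrec1 : Ψ (Φ s₁) = s₁) (hrec2 : Ψ (Φ s₂) = s₂)
    (hΦdual : ∀ b ∈ B, ∃ a ∈ A, ∀ s ∈ S, b (Φ s) = a s)
    (hΨdual : ∀ a ∈ A, ∃ b ∈ B, ∀ t ∈ T, a (Ψ t) = b t)
    (hopt : ∃ a ∈ A, a s₂ = F s₂) :
    sInf {x | ∃ b ∈ B, b (Φ s₂) = G (Φ s₂) ∧ x = G (Φ s₁) - b (Φ s₁)} =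
      sInf {x | ∃ a ∈ A, a s₂ = F s₂ ∧ x = F s₁ - a s₁} :=
  regret_sufficiency_general S T A B F G hF hG Φ Ψ hΦT s₁ s₂ hs₁ hs₂ hrec1 hrec2 hΦdual hΨdual
end

section
/- Shannon's bound: for any probability vector P = (p_a) on a finite alphabet and any integer-valued length function ℓ satisfying Kraft's inequality Σ_a β^{-ℓ(a)} ≤ 1 (β ≥ 2), the expected length satisfies Σ_a ℓ(a) p_a ≥ -Σ_a p_a log_β p_a; moreover there exists such an integer-valued ℓ with Σ_a ℓ(a) p_a ≤ -Σ_a p_a log_β p_a + 1. -/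
/-!
Lower bound: by `log x ≤ x - 1`, every term of `∑ p log (q / p)` is at most `q - p`, which gives
Gibbs' inequality `∑ p log q ≤ ∑ p log p` whenever `∑ q ≤ ∑ p`; apply it to `q = β ^ (-ℓ)`.
Upper bound: the Shannon lengths `ℓ = ⌈-log_β p⌉` satisfy `β ^ (-ℓ) ≤ p`, hence Kraft's inequality,
and exceed `-log_β p` by less than one.
-/

open Real Finset

namespace InformationTheory

variable {ι : Type*} {s : Finset ι} {p q : ι → ℝ} {b : ℝ}

theorem mul_log_sub_mul_log_le {x y : ℝ} (hx : 0 < x) (hy : 0 < y) :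
    x * log y - x * log x ≤ y - x := by
  have hlog := log_le_sub_one_of_pos (div_pos hy hx)
  rw [log_div hy.ne' hx.ne'] at hlog
  calc x * log y - x * log x = x * (log y - log x) := by ring
    _ ≤ x * (y / x - 1) := mul_le_mul_of_nonneg_left hlog hx.le
    _ = y - x := by field_simp

theorem sum_mul_log_le_sum_mul_log (hp : ∀ i ∈ s, 0 < p i) (hq : ∀ i ∈ s, 0 < q i)
    (hqp : ∑ i ∈ s, q i ≤ ∑ i ∈ s, p i) :
    ∑ i ∈ s, p i * log (q i) ≤ ∑ i ∈ s, p i * log (p i) := by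
  have hsum := sum_le_sum fun i hi => mul_log_sub_mul_log_le (hp i hi) (hq i hi)
  rw [sum_sub_distrib, sum_sub_distrib] at hsum
  linarith

theorem sum_mul_logb_le_sum_mul_logb (hb : 1 < b) (hp : ∀ i ∈ s, 0 < p i)
    (hq : ∀ i ∈ s, 0 < q i) (hqp : ∑ i ∈ s, q i ≤ ∑ i ∈ s, p i) :
    ∑ i ∈ s, p i * logb b (q i) ≤ ∑ i ∈ s, p i * logb b (p i) := by
  simp only [logb, mul_div_assoc', ← sum_div]
  exact div_le_div_of_nonneg_right (sum_mul_log_le_sum_mul_log hp hq hqp) (log_pos hb).le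

theorem neg_sum_mul_logb_le_sum_mul_length (hb : 1 < b) (hp : ∀ i ∈ s, 0 < p i)
    (hp1 : ∑ i ∈ s, p i = 1) (ℓ : ι → ℕ) (hkraft : ∑ i ∈ s, (b ^ ℓ i)⁻¹ ≤ 1) :
    -∑ i ∈ s, p i * logb b (p i) ≤ ∑ i ∈ s, p i * ℓ i := by
  have hq : ∀ i ∈ s, 0 < (b ^ ℓ i)⁻¹ := fun i _ => by have := hb.trans' one_pos; positivity
  have hgibbs := sum_mul_logb_le_sum_mul_logb hb hp hq (hkraft.trans hp1.ge)
  simp only [logb_inv, logb_pow, logb_self_eq_one hb, mul_one, mul_neg, sum_neg_distrib]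
    at hgibbs
  linarith

noncomputable def shannonLength (b x : ℝ) : ℕ := ⌈-logb b x⌉₊

theorem inv_pow_shannonLength_le {x : ℝ} (hb : 1 < b) (hx : 0 < x) :
    (b ^ shannonLength b x)⁻¹ ≤ x := by
  have hb0 : 0 < b := hb.trans' one_pos
  rw [← logb_le_logb hb (by positivity) hx, logb_inv, logb_pow, logb_self_eq_one hb, mul_one,
    neg_le]
  exact Nat.le_ceil _

theorem shannonLength_lt {x : ℝ} (hb : 1 < b) (hx0 : 0 < x) (hx1 : x ≤ 1) :
    (shannonLength b x : ℝ) < -logb b x + 1 :=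
  Nat.ceil_lt_add_one (neg_nonneg.2 (logb_nonpos hb hx0.le hx1))

theorem sum_inv_pow_shannonLength_le (hb : 1 < b) (hp : ∀ i ∈ s, 0 < p i) :
    ∑ i ∈ s, (b ^ shannonLength b (p i))⁻¹ ≤ ∑ i ∈ s, p i :=
  sum_le_sum fun i hi => inv_pow_shannonLength_le hb (hp i hi)

theorem sum_mul_shannonLength_le (hb : 1 < b) (hp : ∀ i ∈ s, 0 < p i)
    (hp1 : ∑ i ∈ s, p i = 1) :
    ∑ i ∈ s, p i * shannonLength b (p i) ≤ -∑ i ∈ s, p i * logb b (p i) + 1 := by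
  have hle1 : ∀ i ∈ s, p i ≤ 1 := fun i hi =>
    hp1 ▸ single_le_sum (fun j hj => (hp j hj).le) hi
  calc ∑ i ∈ s, p i * shannonLength b (p i)
      ≤ ∑ i ∈ s, p i * (-logb b (p i) + 1) := sum_le_sum fun i hi =>
        mul_le_mul_of_nonneg_left (shannonLength_lt hb (hp i hi) (hle1 i hi)).le (hp i hi).le
    _ = -∑ i ∈ s, p i * logb b (p i) + 1 := by
        simp only [mul_add, mul_neg, mul_one, sum_add_distrib, sum_neg_distrib, hp1]

end InformationTheory

open InformationTheory

/-- Shannon's bounds: any integer-valued length function satisfying Kraft's inequality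
has expected length at least the base-`β` entropy, and some such length function has
expected length less than entropy plus one. -/
theorem shannon_bound {A : Type*} [Fintype A] (β : ℕ) (hβ : 2 ≤ β)
    (p : A → ℝ) (hp : ∀ a, 0 < p a) (hp1 : ∑ a, p a = 1) :
    (∀ ℓ : A → ℕ, ∑ a, ((β : ℝ) ^ ℓ a)⁻¹ ≤ 1 →
      -∑ a, p a * Real.logb β (p a) ≤ ∑ a, p a * (ℓ a : ℝ)) ∧
    (∃ ℓ : A → ℕ, ∑ a, ((β : ℝ) ^ ℓ a)⁻¹ ≤ 1 ∧
      ∑ a, p a * (ℓ a : ℝ) ≤ -∑ a, p a * Real.logb β (p a) + 1) := by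
  have hβ1 : (1 : ℝ) < β := by exact_mod_cast hβ
  have hp' : ∀ a ∈ univ, 0 < p a := fun a _ => hp a
  exact ⟨neg_sum_mul_logb_le_sum_mul_length hβ1 hp' hp1,
    fun a => shannonLength β (p a),
    (sum_inv_pow_shannonLength_le hβ1 hp').trans hp1.le,
    sum_mul_shannonLength_le hβ1 hp' hp1⟩
end

section
/- If ℓ : A → ℝ satisfies Kraft's inequality Σ_a β^{-ℓ(a)} ≤ 1, then for every n the function ℓ̃(a₁…a_n) = ⌈Σᵢ ℓ(aᵢ)⌉ on Aⁿ is integer valued, satisfies Kraft's inequality over Aⁿ, and |ℓ̃(a₁…a_n)/n - (1/n)Σᵢ ℓ(aᵢ)| ≤ 1/n. Conversely, if for every ε > 0 there exists n and an integer-valued function L : Aⁿ → ℕ satisfying Kraft's inequality with |L(a₁…a_n)/n - (1/n)Σᵢℓ(aᵢ)| ≤ ε for all strings, then Σ_a β^{-ℓ(a)} ≤ 1. -/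
/-!
The Kraft sum is multiplicative over blocks: summing `β ^ (-(ℓ a₁ + ⋯ + ℓ aₙ))` over `Aⁿ`
gives `S ^ n`, where `S = ∑ a, β ^ (-ℓ a)`. Rounding block lengths up only decreases the Kraft
sum, so `S ≤ 1` makes the rounded lengths satisfy Kraft's inequality. Conversely, integer block
lengths `L` within `n ε` of the block sums give `S ^ n ≤ β ^ (n ε) ∑ β ^ (-L) ≤ β ^ (n ε)`, hence
`S ≤ β ^ ε` for every `ε > 0`, i.e. `S ≤ 1`.
-/

open Finset

lemma sum_pi_rpow_neg_sum_eq_pow {A : Type*} [Fintype A] {β : ℝ} (hβ : 0 < β) (f : A → ℝ)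
    (n : ℕ) : ∑ w : Fin n → A, β ^ (-∑ i, f (w i)) = (∑ a, β ^ (-f a)) ^ n := by
  rw [Fintype.sum_pow]
  refine sum_congr rfl fun w _ => ?_
  rw [← sum_neg_distrib, Real.rpow_sum_of_pos hβ]

lemma sum_rpow_neg_le_of_le {X : Type*} [Fintype X] {β : ℝ} (hβ : 1 ≤ β) {f g : X → ℝ}
    (hfg : ∀ x, f x ≤ g x) : ∑ x, β ^ (-g x) ≤ ∑ x, β ^ (-f x) :=
  sum_le_sum fun x _ => Real.rpow_le_rpow_of_exponent_le hβ (neg_le_neg (hfg x))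

lemma abs_ceil_div_sub_one_div_mul_le {c : ℝ} (hc : 0 ≤ c) (x : ℝ) :
    |(⌈x⌉ : ℝ) / c - (1 / c) * x| ≤ 1 / c := by
  have hx : (⌈x⌉ : ℝ) / c - (1 / c) * x = ((⌈x⌉ : ℝ) - x) / c := by ring
  rw [hx, abs_of_nonneg (div_nonneg (by linarith [Int.le_ceil x]) hc)]
  gcongr
  linarith [Int.ceil_lt_add_one x]

lemma sum_rpow_neg_le_rpow_of_block_approx {A : Type*} [Fintype A] {β : ℝ} (hβ : 1 ≤ β)
    (ℓ : A → ℝ) {n : ℕ} (hn : 0 < n) (L : (Fin n → A) → ℝ) (hL : ∑ w, β ^ (-L w) ≤ 1)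
    {ε : ℝ} (happrox : ∀ w, L w / n - (1 / n) * ∑ i, ℓ (w i) ≤ ε) :
    ∑ a, β ^ (-ℓ a) ≤ β ^ ε := by
  have hβ0 : 0 < β := by linarith
  have hn' : (0 : ℝ) < n := by exact_mod_cast hn
  have hblock : ∀ w, L w - n * ε ≤ ∑ i, ℓ (w i) := fun w => by
    have h : (L w - ∑ i, ℓ (w i)) / n ≤ ε := by
      convert happrox w using 1
      ring
    rw [div_le_iff₀ hn'] at h
    linarith
  have hpow : (∑ a, β ^ (-ℓ a)) ^ n ≤ (β ^ ε) ^ n :=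
    calc (∑ a, β ^ (-ℓ a)) ^ n
        = ∑ w : Fin n → A, β ^ (-∑ i, ℓ (w i)) := (sum_pi_rpow_neg_sum_eq_pow hβ0 ℓ n).symm
      _ ≤ ∑ w, β ^ (-(L w - n * ε)) := sum_rpow_neg_le_of_le hβ hblock
      _ = β ^ (n * ε) * ∑ w, β ^ (-L w) := by
        rw [mul_sum]
        refine sum_congr rfl fun w _ => ?_
        rw [← Real.rpow_add hβ0, neg_sub, sub_eq_add_neg]
      _ ≤ β ^ (n * ε) := mul_le_of_le_one_right (Real.rpow_nonneg hβ0.le _) hL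
      _ = (β ^ ε) ^ n := by rw [mul_comm, Real.rpow_mul_natCast hβ0.le]
  exact le_of_pow_le_pow_left₀ hn.ne' (Real.rpow_nonneg hβ0.le _) hpow

lemma le_one_of_forall_pos_le_rpow {β x : ℝ} (hβ : 1 < β) (h : ∀ ε : ℝ, 0 < ε → x ≤ β ^ ε) :
    x ≤ 1 := by
  refine le_of_forall_gt_imp_ge_of_dense fun c hc => ?_
  simpa [Real.rpow_logb (by linarith) hβ.ne' (by linarith)] using
    h _ (Real.logb_pos hβ hc)

/-- Kraft's inequality for real-valued length functions via block codes: a real length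
function satisfies Kraft's inequality iff it can be approximated by integer-valued
block length functions satisfying Kraft's inequality. -/
theorem kraft_real_blocks {A : Type*} [Fintype A] (β : ℝ) (hβ : 2 ≤ β) (ℓ : A → ℝ) :
    ((∑ a, β ^ (-(ℓ a)) ≤ 1) →
      ∀ n : ℕ, 0 < n →
        (∑ w : Fin n → A, β ^ (-((⌈∑ i, ℓ (w i)⌉ : ℤ) : ℝ)) ≤ 1) ∧
        ∀ w : Fin n → A,
          |((⌈∑ i, ℓ (w i)⌉ : ℝ)) / n - (1 / n) * ∑ i, ℓ (w i)| ≤ 1 / n) ∧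
    ((∀ ε > (0:ℝ), ∃ n : ℕ, 0 < n ∧ ∃ L : (Fin n → A) → ℕ,
        (∑ w : Fin n → A, β ^ (-(L w : ℝ)) ≤ 1) ∧
        ∀ w : Fin n → A, |((L w : ℝ)) / n - (1 / n) * ∑ i, ℓ (w i)| ≤ ε) →
      ∑ a, β ^ (-(ℓ a)) ≤ 1) := by
  refine ⟨fun hkraft n _ => ⟨?_, fun w => abs_ceil_div_sub_one_div_mul_le n.cast_nonneg _⟩,
    fun happrox => le_one_of_forall_pos_le_rpow (by linarith) fun ε hε => ?_⟩
  · calc ∑ w : Fin n → A, β ^ (-((⌈∑ i, ℓ (w i)⌉ : ℤ) : ℝ))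
        ≤ ∑ w : Fin n → A, β ^ (-∑ i, ℓ (w i)) :=
          sum_rpow_neg_le_of_le (by linarith) fun w => Int.le_ceil _
      _ = (∑ a, β ^ (-ℓ a)) ^ n := sum_pi_rpow_neg_sum_eq_pow (by linarith) ℓ n
      _ ≤ 1 := pow_le_one₀ (sum_nonneg fun a _ => by positivity) hkraft
  · obtain ⟨n, hn, L, hL, hLε⟩ := happrox ε hε
    exact sum_rpow_neg_le_rpow_of_block_approx (by linarith) ℓ hn (fun w => L w) hL
      fun w => (abs_le.mp (hLε w)).2
end
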